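/- For $\bar n_y = \begin{pmatrix}1 & 0 \\ y & 1\end{pmatrix} \in \mathrm{Sl}(2,\mathbb{R})$: $\bar n_y \in HAN$ if and only if $|y| < 1$, and in that case the $A$-component of $\bar n_y$ in the decomposition $HAN$ is $\mathrm{diag}(\sqrt{1-y^2}, 1/\sqrt{1-y^2})$. -/
import Mathlib


/-- The subgroup `H = SO(1,1) = {± (cosh t, sinh t; sinh t, cosh t)}` of `SL(2,ℝ)`. -/
def sl2H : Set (Matrix (Fin 2) (Fin 2) ℝ) :=
  {M | ∃ (t : ℝ) (ε : ℝ), (ε = 1 ∨ ε = -1) ∧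
    M = ε • !![Real.cosh t, Real.sinh t; Real.sinh t, Real.cosh t]}

/-- The subgroup `A` of positive diagonal matrices of determinant 1. -/
def sl2A : Set (Matrix (Fin 2) (Fin 2) ℝ) :=
  {M | ∃ s : ℝ, M = !![Real.exp s, 0; 0, Real.exp (-s)]}

/-- The subgroup `N` of upper unipotent matrices. -/
def sl2N : Set (Matrix (Fin 2) (Fin 2) ℝ) :=
  {M | ∃ x : ℝ, M = !![1, x; 0, 1]}

private theorem aux9 (y t s x ε : ℝ) (hε : ε = 1 ∨ ε = -1)
    (heq : !![(1:ℝ), 0; y, 1] =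
      (ε • !![Real.cosh t, Real.sinh t; Real.sinh t, Real.cosh t]) *
      !![Real.exp s, 0; 0, Real.exp (-s)] * !![1, x; 0, 1]) :
    Real.exp s ^ 2 = 1 - y ^ 2 ∧ Real.exp s = Real.sqrt (1 - y ^ 2) := by
  rw [Matrix.smul_mul, Matrix.smul_mul, Matrix.mul_fin_two, Matrix.mul_fin_two] at heq
  have e00 := congrFun (congrFun heq 0) 0
  have e10 := congrFun (congrFun heq 1) 0
  simp [Matrix.smul_apply] at e00 e10
  have hc := Real.cosh_pos t
  have he := Real.exp_pos s
  rcases hε with rfl | rfl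
  · rw [one_mul] at e00 e10
    have h3 : Real.cosh t ^ 2 - Real.sinh t ^ 2 = 1 := Real.cosh_sq_sub_sinh_sq t
    have key : Real.exp s ^ 2 = 1 - y ^ 2 := by
      calc Real.exp s ^ 2 = (Real.cosh t ^ 2 - Real.sinh t ^ 2) * Real.exp s ^ 2 := by
            rw [h3]; ring
        _ = (Real.cosh t * Real.exp s) ^ 2 - (Real.sinh t * Real.exp s) ^ 2 := by ring
        _ = 1 - y ^ 2 := by rw [← e00, ← e10]; ring
    exact ⟨key, by rw [← key, Real.sqrt_sq he.le]⟩
  · nlinarith [mul_pos hc he]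

theorem stmt_9 (y : ℝ) :
    ((∃ h ∈ sl2H, ∃ m ∈ sl2A, ∃ n ∈ sl2N, !![1, 0; y, 1] = h * m * n) ↔ |y| < 1) ∧
    (∀ h m n : Matrix (Fin 2) (Fin 2) ℝ, h ∈ sl2H → m ∈ sl2A → n ∈ sl2N →
      !![1, 0; y, 1] = h * m * n →
        m = !![Real.sqrt (1 - y ^ 2), 0; 0, (Real.sqrt (1 - y ^ 2))⁻¹]) := by
  constructor
  · constructor
    · rintro ⟨h, ⟨t, ε, hε, rfl⟩, m, ⟨s, rfl⟩, n, ⟨x, rfl⟩, heq⟩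
      have key := (aux9 y t s x ε hε heq).1
      have he := Real.exp_pos s
      rw [abs_lt]
      constructor <;> nlinarith [sq_nonneg (Real.exp s)]
    · intro hy
      have hy2 : 0 < 1 - y ^ 2 := by
        have := abs_lt.mp hy; nlinarith [this.1, this.2]
      set r := Real.sqrt (1 - y ^ 2) with hr
      have hrpos : 0 < r := Real.sqrt_pos.mpr hy2
      have hrsq : r ^ 2 = 1 - y ^ 2 := Real.sq_sqrt hy2.le
      have hcosh : Real.cosh (Real.arsinh (y / r)) = r⁻¹ := by
        rw [Real.cosh_arsinh]
        rw [show 1 + (y / r) ^ 2 = (r ^ 2)⁻¹ by field_simp; nlinarith]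
        rw [Real.sqrt_inv, Real.sqrt_sq hrpos.le]
      have hsinh : Real.sinh (Real.arsinh (y / r)) = y / r := Real.sinh_arsinh _
      have hexp : Real.exp (Real.log r) = r := Real.exp_log hrpos
      have hexp' : Real.exp (-Real.log r) = r⁻¹ := by rw [Real.exp_neg, hexp]
      refine ⟨_, ⟨Real.arsinh (y / r), 1, Or.inl rfl, rfl⟩,
        _, ⟨Real.log r, rfl⟩, _, ⟨-y / r ^ 2, rfl⟩, ?_⟩
      rw [one_smul, hcosh, hsinh, hexp, hexp', Matrix.mul_fin_two, Matrix.mul_fin_two]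
      have hrne : r ≠ 0 := hrpos.ne'
      ext i j
      fin_cases i <;> fin_cases j <;> simp <;> field_simp <;> nlinarith
  · rintro h m n ⟨t, ε, hε, rfl⟩ ⟨s, rfl⟩ ⟨x, rfl⟩ heq
    obtain ⟨key, hes⟩ := aux9 y t s x ε hε heq
    rw [hes, Real.exp_neg, hes]
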